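/- arXiv:1903.07175 — 4 statements merged into one kernel-verified Lean document; each statement's English description precedes it below -/
import Mathlib

section
/- The function Q(x) = √2 / cosh(x) is an H¹ solution of the ODE Q'' - Q + Q³ = 0 on ℝ. -/
/-!
Differentiating `Q = √2 / cosh` gives `Q' = -Q tanh`, and with `tanh' = 1 / cosh² = Q² / 2` and
`tanh² = 1 - 1 / cosh²` this yields `Q'' = Q tanh² - Q / cosh² = Q - Q³`.
For the `H¹` bounds, `1 + x² ≤ cosh² x` makes `1 / cosh²` integrable, so `Q ∈ L²`,
and `|Q'| ≤ |Q|` because `|tanh| < 1`.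
-/

open Real MeasureTheory

noncomputable def Q (x : ℝ) : ℝ := Real.sqrt 2 / Real.cosh x

namespace Real

theorem hasDerivAt_tanh (x : ℝ) : HasDerivAt tanh (cosh x ^ 2)⁻¹ x := by
  have hc : cosh x ≠ 0 := (cosh_pos x).ne'
  rw [funext tanh_eq_sinh_div_cosh]
  refine ((hasDerivAt_sinh x).fun_div (hasDerivAt_cosh x) hc).congr_deriv ?_
  rw [← sq, ← sq, cosh_sq_sub_sinh_sq, one_div]

theorem one_add_sq_le_cosh_sq (x : ℝ) : 1 + x ^ 2 ≤ cosh x ^ 2 := by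
  have h : |x| ≤ |sinh x| := abs_sinh x ▸ self_le_sinh_iff.2 (abs_nonneg x)
  rw [cosh_sq']
  exact add_le_add_right (sq_le_sq.2 h) 1

theorem memLp_two_inv_cosh : MemLp (fun x => (cosh x)⁻¹) 2 volume := by
  have hmeas : AEStronglyMeasurable (fun x => (cosh x)⁻¹) volume :=
    (continuous_cosh.inv₀ fun x => (cosh_pos x).ne').aestronglyMeasurable
  rw [memLp_two_iff_integrable_sq hmeas]
  refine integrable_inv_one_add_sq.mono' (hmeas.pow 2) (.of_forall fun x => ?_)
  rw [norm_of_nonneg (by positivity), inv_pow]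
  exact inv_anti₀ (by positivity) (one_add_sq_le_cosh_sq x)

end Real

theorem Q_eq_mul_inv_cosh : Q = fun x => √2 * (cosh x)⁻¹ :=
  funext fun _ => div_eq_mul_inv _ _

theorem Q_sq (x : ℝ) : Q x ^ 2 = 2 / cosh x ^ 2 := by
  rw [Q, div_pow, sq_sqrt zero_le_two]

theorem hasDerivAt_Q (x : ℝ) : HasDerivAt Q (-(Q x * tanh x)) x := by
  have hc : cosh x ≠ 0 := (cosh_pos x).ne'
  refine ((hasDerivAt_const x √2).fun_div (hasDerivAt_cosh x) hc).congr_deriv ?_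
  rw [Q, tanh_eq_sinh_div_cosh]
  field_simp
  ring

theorem deriv_Q : deriv Q = fun x => -(Q x * tanh x) :=
  funext fun x => (hasDerivAt_Q x).deriv

theorem hasDerivAt_deriv_Q (x : ℝ) : HasDerivAt (deriv Q) (Q x - Q x ^ 3) x := by
  have hc : cosh x ≠ 0 := (cosh_pos x).ne'
  rw [deriv_Q]
  refine ((hasDerivAt_Q x).mul (hasDerivAt_tanh x)).neg.congr_deriv ?_
  rw [pow_succ' (Q x) 2, Q_sq, tanh_eq_sinh_div_cosh]
  field_simp
  linear_combination (-Q x) * cosh_sq x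

theorem abs_deriv_Q_le (x : ℝ) : |deriv Q x| ≤ |Q x| := by
  rw [deriv_Q, abs_neg, abs_mul]
  exact mul_le_of_le_one_right (abs_nonneg _) (abs_tanh_lt_one x).le

theorem stmt0 :
    MemLp Q 2 (volume : Measure ℝ) ∧
    MemLp (deriv Q) 2 (volume : Measure ℝ) ∧
    ∀ x : ℝ, deriv (deriv Q) x - Q x + (Q x) ^ 3 = 0 := by
  have hQ : MemLp Q 2 volume := Q_eq_mul_inv_cosh ▸ memLp_two_inv_cosh.const_mul √2
  refine ⟨hQ, hQ.of_le (measurable_deriv Q).aestronglyMeasurable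
    (.of_forall abs_deriv_Q_le), fun x => ?_⟩
  rw [(hasDerivAt_deriv_Q x).deriv]
  ring
end

section
/- Let 0 < c₁ ≤ c₂, q ≥ 0, and σ > 1. If c₁ ≠ c₂ then ∫_ℝ (1+|x-σ|)^q e^{-c₁|x-σ|} e^{-c₂|x|} dx ≤ C σ^q e^{-c₁σ}, with C independent of σ. -/
open Real MeasureTheory

lemma my_integrable_exp_neg_abs {a : ℝ} (ha : 0 < a) :
    Integrable (fun x : ℝ => Real.exp (-a * |x|)) := by
  rw [← integrableOn_univ, ← @Set.Iio_union_Ici _ _ (0 : ℝ), integrableOn_union,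
    integrableOn_Ici_iff_integrableOn_Ioi]
  constructor
  · rw [← (Measure.measurePreserving_neg (volume : Measure ℝ)).integrableOn_comp_preimage
        (Homeomorph.neg ℝ).measurableEmbedding]
    simp only [Function.comp_def, abs_neg, Set.neg_preimage, Set.neg_Iio, neg_zero]
    exact (exp_neg_integrableOn_Ioi 0 ha).congr_fun
      (fun x hx => by rw [abs_of_pos hx]) measurableSet_Ioi
  · exact (exp_neg_integrableOn_Ioi 0 ha).congr_fun
      (fun x hx => by rw [abs_of_pos hx]) measurableSet_Ioi

theorem stmt13 (c₁ c₂ q : ℝ) (hc₁ : 0 < c₁) (hc : c₁ ≤ c₂) (hne : c₁ ≠ c₂)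
    (hq : 0 ≤ q) :
    ∃ C : ℝ, ∀ σ : ℝ, 1 < σ →
      (∫ x : ℝ, (1 + |x - σ|) ^ q * Real.exp (-c₁ * |x - σ|) * Real.exp (-c₂ * |x|))
        ≤ C * σ ^ q * Real.exp (-c₁ * σ) := by
  set ε : ℝ := c₂ - c₁ with hεdef
  have hε : 0 < ε := sub_pos.2 (lt_of_le_of_ne hc hne)
  set s : ℝ := min 1 (ε / (2 * (q + 1))) with hsdef
  have hs0 : 0 < s := lt_min one_pos (by positivity)
  have hs1 : s ≤ 1 := min_le_left _ _
  have hsq : s * q ≤ ε / 2 := by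
    have h1 : s ≤ ε / (2 * (q + 1)) := min_le_right _ _
    have h2 : s * q ≤ (ε / (2 * (q + 1))) * (q + 1) := by
      apply mul_le_mul h1 (by linarith) hq (by positivity)
    calc s * q ≤ (ε / (2 * (q + 1))) * (q + 1) := h2
      _ = ε / 2 := by field_simp
  have hI : Integrable (fun x : ℝ => Real.exp (-(ε / 2) * |x|)) :=
    my_integrable_exp_neg_abs (by positivity)
  set I : ℝ := ∫ x : ℝ, Real.exp (-(ε / 2) * |x|) with hIdef
  have hInn : 0 ≤ I := integral_nonneg fun x => (exp_pos _).le
  refine ⟨(2 * s⁻¹) ^ q * I, fun σ hσ => ?_⟩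
  have hσ0 : 0 < σ := lt_trans one_pos hσ
  set K : ℝ := (2 * s⁻¹) ^ q * σ ^ q * Real.exp (-c₁ * σ) with hKdef
  have hKnn : 0 ≤ K := by positivity
  have key : ∀ x : ℝ,
      (1 + |x - σ|) ^ q * Real.exp (-c₁ * |x - σ|) * Real.exp (-c₂ * |x|)
        ≤ K * Real.exp (-(ε / 2) * |x|) := by
    intro x
    have habs : σ ≤ |x - σ| + |x| := by
      have h := abs_sub x (x - σ)
      rw [show x - (x - σ) = σ by ring, abs_of_pos hσ0] at h
      linarith
    -- bound on the polynomial part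
    have h1 : 1 + |x - σ| ≤ (2 * s⁻¹) * σ * Real.exp (s * |x|) := by
      have e1 : 1 + |x - σ| ≤ 2 * σ * (1 + |x|) := by
        have : |x - σ| ≤ |x| + σ := by
          calc |x - σ| ≤ |x| + |σ| := abs_sub x σ
            _ = |x| + σ := by rw [abs_of_pos hσ0]
        nlinarith [abs_nonneg x]
      have e2 : 1 + |x| ≤ s⁻¹ * Real.exp (s * |x|) := by
        have : s * (1 + |x|) ≤ Real.exp (s * |x|) := by
          have := Real.add_one_le_exp (s * |x|)
          nlinarith [abs_nonneg x]
        calc 1 + |x| = s⁻¹ * (s * (1 + |x|)) := by field_simp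
          _ ≤ s⁻¹ * Real.exp (s * |x|) := by
              apply mul_le_mul_of_nonneg_left this (by positivity)
      calc 1 + |x - σ| ≤ 2 * σ * (1 + |x|) := e1
        _ ≤ 2 * σ * (s⁻¹ * Real.exp (s * |x|)) := by
            apply mul_le_mul_of_nonneg_left e2 (by positivity)
        _ = (2 * s⁻¹) * σ * Real.exp (s * |x|) := by ring
    have h1q : (1 + |x - σ|) ^ q ≤ (2 * s⁻¹) ^ q * σ ^ q * Real.exp ((ε / 2) * |x|) := by
      have h0 : (0:ℝ) ≤ 1 + |x - σ| := by positivity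
      have := Real.rpow_le_rpow h0 h1 hq
      calc (1 + |x - σ|) ^ q ≤ ((2 * s⁻¹) * σ * Real.exp (s * |x|)) ^ q := this
        _ = (2 * s⁻¹) ^ q * σ ^ q * (Real.exp (s * |x|)) ^ q := by
            rw [Real.mul_rpow (by positivity) (exp_pos _).le,
              Real.mul_rpow (by positivity) hσ0.le]
        _ = (2 * s⁻¹) ^ q * σ ^ q * Real.exp (s * |x| * q) := by
            rw [← Real.exp_mul]
        _ ≤ (2 * s⁻¹) ^ q * σ ^ q * Real.exp ((ε / 2) * |x|) := by
            apply mul_le_mul_of_nonneg_left _ (by positivity)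
            apply Real.exp_le_exp.2
            have : s * |x| * q = (s * q) * |x| := by ring
            rw [this]
            apply mul_le_mul_of_nonneg_right hsq (abs_nonneg x)
    have h2 : Real.exp (-c₁ * |x - σ|) * Real.exp (-c₂ * |x|)
        ≤ Real.exp (-c₁ * σ) * Real.exp (-ε * |x|) := by
      rw [← Real.exp_add, ← Real.exp_add]
      apply Real.exp_le_exp.2
      have : c₂ * |x| = c₁ * |x| + ε * |x| := by rw [hεdef]; ring
      nlinarith [abs_nonneg x, abs_nonneg (x - σ)]
    calc (1 + |x - σ|) ^ q * Real.exp (-c₁ * |x - σ|) * Real.exp (-c₂ * |x|)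
        ≤ ((2 * s⁻¹) ^ q * σ ^ q * Real.exp ((ε / 2) * |x|)) *
            (Real.exp (-c₁ * σ) * Real.exp (-ε * |x|)) := by
          rw [mul_assoc]
          apply mul_le_mul h1q h2 (by positivity) (by positivity)
      _ = K * Real.exp ((ε / 2) * |x| + -ε * |x|) := by
          rw [Real.exp_add]; rw [hKdef]; ring
      _ = K * Real.exp (-(ε / 2) * |x|) := by ring_nf
  have hint : (∫ x : ℝ, (1 + |x - σ|) ^ q * Real.exp (-c₁ * |x - σ|) * Real.exp (-c₂ * |x|))
      ≤ ∫ x : ℝ, K * Real.exp (-(ε / 2) * |x|) := by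
    apply integral_mono_of_nonneg
    · exact Filter.Eventually.of_forall fun x => by positivity
    · exact hI.const_mul K
    · exact Filter.Eventually.of_forall key
  calc (∫ x : ℝ, (1 + |x - σ|) ^ q * Real.exp (-c₁ * |x - σ|) * Real.exp (-c₂ * |x|))
      ≤ ∫ x : ℝ, K * Real.exp (-(ε / 2) * |x|) := hint
    _ = K * I := by rw [integral_const_mul]
    _ = (2 * s⁻¹) ^ q * I * σ ^ q * Real.exp (-c₁ * σ) := by rw [hKdef]; ring
end

section
/- Let Q(x) = √2/cosh(x), κ = 2√2, c > 0, and σ > 1. Then |∫_ℝ Q_c²(x-σ) Q(x) Q'(x) dx + c³κ² e^{-2cσ} ∫_ℝ e^{2cx} Q²(x) dx| ≤ C e^{-2cθσ} for any 1 < θ < min{1/c, 2}, where Q_c(x) = cQ(cx). -/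
open Real MeasureTheory Set

lemma Q_hasDeriv (x : ℝ) : HasDerivAt Q (-(Real.sqrt 2 * Real.sinh x) / Real.cosh x ^ 2) x := by
  have h := (hasDerivAt_const x (Real.sqrt 2)).div (Real.hasDerivAt_cosh x) (Real.cosh_pos x).ne'
  simp at h; exact h

lemma deriv_Q_eq : deriv Q = fun x => -(Real.sqrt 2 * Real.sinh x) / Real.cosh x ^ 2 := by
  funext x; exact (Q_hasDeriv x).deriv

lemma continuous_derivQ : Continuous (deriv Q) := by
  rw [deriv_Q_eq]
  exact Continuous.div (by continuity) (by continuity)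
    (fun x => pow_ne_zero _ (Real.cosh_pos x).ne')

lemma continuous_Q : Continuous Q := by
  unfold Q
  exact Continuous.div continuous_const Real.continuous_cosh (fun x => (Real.cosh_pos x).ne')

lemma exp_abs_le_two_cosh (x : ℝ) : Real.exp |x| ≤ 2 * Real.cosh x := by
  rw [← Real.cosh_abs, Real.cosh_eq]
  have := Real.exp_pos (-|x|)
  linarith

lemma QQ'_bound (x : ℝ) : |Q x * deriv Q x| ≤ 8 * Real.exp (-(2 * |x|)) := by
  have hc := Real.cosh_pos x
  have hs : |Real.sinh x| ≤ Real.cosh x := by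
    nlinarith [Real.cosh_sq_sub_sinh_sq x, abs_nonneg (Real.sinh x), sq_abs (Real.sinh x)]
  have h2 : Real.exp |x| ≤ 2 * Real.cosh x := exp_abs_le_two_cosh x
  have hQ : |Q x| = Real.sqrt 2 / Real.cosh x := by
    rw [Q, abs_div, abs_of_pos hc, abs_of_nonneg (Real.sqrt_nonneg 2)]
  have hQ' : |deriv Q x| ≤ Real.sqrt 2 / Real.cosh x := by
    rw [deriv_Q_eq]
    rw [abs_div, abs_of_pos (pow_pos hc 2), abs_neg, abs_mul,
      abs_of_nonneg (Real.sqrt_nonneg 2)]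
    rw [div_le_div_iff₀ (pow_pos hc 2) hc]
    have h0 : (0:ℝ) ≤ Real.sqrt 2 := Real.sqrt_nonneg 2
    have h5 := mul_le_mul_of_nonneg_left hs h0
    nlinarith [mul_le_mul_of_nonneg_right h5 hc.le]
  have key : |Q x * deriv Q x| ≤ 2 / Real.cosh x ^ 2 := by
    rw [abs_mul, hQ]
    calc Real.sqrt 2 / Real.cosh x * |deriv Q x|
        ≤ Real.sqrt 2 / Real.cosh x * (Real.sqrt 2 / Real.cosh x) := by
          apply mul_le_mul_of_nonneg_left hQ' (by positivity)
      _ = 2 / Real.cosh x ^ 2 := by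
          rw [div_mul_div_comm, Real.mul_self_sqrt (by norm_num : (0:ℝ) ≤ 2), ← pow_two]
  refine key.trans ?_
  have h4 : (0:ℝ) < Real.exp |x| := Real.exp_pos _
  have hE : Real.exp (-(2*|x|)) = (Real.exp |x| ^ 2)⁻¹ := by
    have h5 : Real.exp (2*|x|) = Real.exp |x| ^ 2 := by rw [two_mul, Real.exp_add, sq]
    rw [← h5, Real.exp_neg]
  rw [hE, div_le_iff₀ (pow_pos hc 2)]
  have heq : 8 * (Real.exp |x| ^ 2)⁻¹ * Real.cosh x ^ 2
      = 8 * Real.cosh x ^ 2 / Real.exp |x| ^ 2 := by ring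
  rw [heq, le_div_iff₀ (by positivity)]
  nlinarith [h2, h4, hc]

lemma Qsq (z : ℝ) : Q z ^ 2 = 8 * Real.exp (2*z) / (1 + Real.exp (2*z))^2 := by
  have hc := Real.cosh_pos z
  have he : (0:ℝ) < Real.exp z := Real.exp_pos z
  have h2 : Real.exp (2*z) = Real.exp z ^ 2 := by rw [two_mul, Real.exp_add, sq]
  rw [Q, div_pow, Real.sq_sqrt (by norm_num : (0:ℝ) ≤ 2), Real.cosh_eq, Real.exp_neg, h2]
  field_simp
  ring

lemma Rbound (c b y : ℝ) (hc : 0 < c) (h1 : 2*c ≤ b) (h2 : b ≤ 4*c) :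
    |(c * Q (c*y))^2 - 8*c^2*Real.exp (2*(c*y))| ≤ 16*c^2*Real.exp (b*y) := by
  set t : ℝ := Real.exp (2*(c*y)) with ht
  have htpos : 0 < t := Real.exp_pos _
  have hQ : (c * Q (c*y))^2 = 8*c^2*t/(1+t)^2 := by
    rw [mul_pow, Qsq]; ring
  have h1t : (0:ℝ) < (1+t)^2 := by positivity
  have hu : (8*c^2*t/(1+t)^2) * (1+t)^2 = 8*c^2*t := div_mul_cancel₀ _ h1t.ne'
  rw [hQ]
  set u : ℝ := 8*c^2*t/(1+t)^2 with hudef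
  have hupos : 0 < u := by positivity
  rw [abs_le]
  rcases le_or_gt y 0 with hy | hy
  · -- t ≤ 1, bound by 16 c^2 t^2 ≤ 16 c^2 exp (b y)
    have ht1 : t ≤ 1 := Real.exp_le_one_iff.mpr (by nlinarith)
    have ht2 : t^2 = Real.exp ((4*c)*y) := by
      rw [ht, ← Real.exp_nat_mul]; norm_num; ring_nf
    have hby : Real.exp ((4*c)*y) ≤ Real.exp (b*y) :=
      Real.exp_le_exp.mpr (by nlinarith)
    have hu2 : 16*c^2*t^2 = 2*t*(u*(1+t)^2) := by rw [hu]; ring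
    have hule : u ≤ 8*c^2*t := by nlinarith [hu, hupos, mul_nonneg hupos.le htpos.le, sq_nonneg t]
    have hkey : |u - 8*c^2*t| ≤ 16*c^2*t^2 := by
      rw [abs_le]
      constructor
      · nlinarith [hu, hu2, mul_nonneg hupos.le (sq_nonneg t),
          mul_nonneg (mul_nonneg hupos.le htpos.le) (sq_nonneg t)]
      · nlinarith [hule, mul_pos (mul_pos (show (0:ℝ)<16 by norm_num) (pow_pos hc 2)) (mul_pos htpos htpos)]
    have := hkey
    rw [abs_le] at this
    constructor
    · nlinarith [this.1, hby, ht2]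
    · nlinarith [this.2, hby, ht2]
  · -- t ≥ 1 side: bound by 16 c^2 t ≤ 16 c^2 exp (b y)
    have hby : t ≤ Real.exp (b*y) := by
      rw [ht]; exact Real.exp_le_exp.mpr (by nlinarith)
    have hule : u ≤ 8*c^2*t := by nlinarith [hu, hupos, mul_nonneg hupos.le htpos.le, sq_nonneg t]
    constructor
    · nlinarith [hule, hby, hupos]
    · nlinarith [hule, hby, mul_pos (pow_pos hc 2) htpos, Real.exp_pos (b*y)]

lemma integrable_exp_lin_abs (a : ℝ) (ha : |a| < 2) :
    Integrable (fun x : ℝ => Real.exp (a*x - 2*|x|)) := by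
  have hm : Continuous (fun x : ℝ => Real.exp (a*x - 2*|x|)) := by
    apply Real.continuous_exp.comp
    exact (continuous_const.mul continuous_id).sub (continuous_const.mul continuous_abs)
  rcases abs_lt.1 ha with ⟨ha1, ha2⟩
  have hIoi : IntegrableOn (fun x : ℝ => Real.exp (a*x - 2*|x|)) (Ioi 0) := by
    apply Integrable.mono' (exp_neg_integrableOn_Ioi 0 (show (0:ℝ) < 2 - a by linarith))
      hm.aestronglyMeasurable
    filter_upwards [ae_restrict_mem measurableSet_Ioi] with x hx
    rw [Real.norm_eq_abs, abs_of_pos (Real.exp_pos _), abs_of_pos (show (0:ℝ) < x from hx)]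
    apply Real.exp_le_exp.mpr
    apply le_of_eq; ring
  have hIic : IntegrableOn (fun x : ℝ => Real.exp (a*x - 2*|x|)) (Iic 0) := by
    rw [← Measure.map_neg_eq_self (volume : Measure ℝ)]
    have m : MeasurableEmbedding fun x : ℝ => -x := (Homeomorph.neg ℝ).measurableEmbedding
    rw [m.integrableOn_map_iff]
    have : ((fun x : ℝ => Real.exp (a*x - 2*|x|)) ∘ fun x : ℝ => -x)
        = fun x : ℝ => Real.exp ((-a)*x - 2*|x|) := by
      funext x; simp only [Function.comp, abs_neg]; ring_nf
    rw [this]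
    have hpre : (fun x : ℝ => -x) ⁻¹' (Iic 0) = Ici 0 := by
      ext x; simp
    rw [hpre]
    rw [integrableOn_Ici_iff_integrableOn_Ioi]
    apply Integrable.mono' (exp_neg_integrableOn_Ioi 0 (show (0:ℝ) < 2 + a by linarith))
      (Real.continuous_exp.comp (((continuous_const.mul continuous_id).sub
        (continuous_const.mul continuous_abs)))).aestronglyMeasurable
    filter_upwards [ae_restrict_mem measurableSet_Ioi] with x hx
    simp only [Function.comp, id_eq, Real.norm_eq_abs, abs_of_pos (Real.exp_pos _)]
    simp only [Pi.sub_apply, Pi.mul_apply, id_eq]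
    rw [abs_of_pos (show (0:ℝ) < x from hx)]
    apply Real.exp_le_exp.mpr
    apply le_of_eq; ring
  rw [← integrableOn_univ, ← Iic_union_Ioi (a := (0:ℝ))]
  exact hIic.union hIoi

lemma Qsq_bound (x : ℝ) : Q x ^ 2 ≤ 8 * Real.exp (-(2 * |x|)) := by
  have hc := Real.cosh_pos x
  have h2 : Real.exp |x| ≤ 2 * Real.cosh x := exp_abs_le_two_cosh x
  have h4 : (0:ℝ) < Real.exp |x| := Real.exp_pos _
  have hQ : Q x ^ 2 = 2 / Real.cosh x ^ 2 := by
    rw [Q, div_pow, Real.sq_sqrt (by norm_num : (0:ℝ) ≤ 2)]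
  rw [hQ]
  have hE : Real.exp (-(2*|x|)) = (Real.exp |x| ^ 2)⁻¹ := by
    have h5 : Real.exp (2*|x|) = Real.exp |x| ^ 2 := by rw [two_mul, Real.exp_add, sq]
    rw [← h5, Real.exp_neg]
  rw [hE, div_le_iff₀ (pow_pos hc 2)]
  have heq : 8 * (Real.exp |x| ^ 2)⁻¹ * Real.cosh x ^ 2
      = 8 * Real.cosh x ^ 2 / Real.exp |x| ^ 2 := by ring
  rw [heq, le_div_iff₀ (by positivity)]
  nlinarith [h2, h4, hc]

lemma integrable_eQQ (c : ℝ) (hc : 0 < c) (hc1 : c < 1) :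
    Integrable (fun x : ℝ => Real.exp (2*c*x) * (Q x * deriv Q x)) := by
  apply Integrable.mono' ((integrable_exp_lin_abs (2*c)
      (by rw [abs_of_pos (by linarith)]; linarith)).const_mul 8)
  · exact ((Real.continuous_exp.comp (continuous_const.mul continuous_id)).mul
      (continuous_Q.mul continuous_derivQ)).aestronglyMeasurable
  · filter_upwards with x
    rw [Real.norm_eq_abs, abs_mul, abs_of_pos (Real.exp_pos _)]
    calc Real.exp (2*c*x) * |Q x * deriv Q x|
        ≤ Real.exp (2*c*x) * (8 * Real.exp (-(2*|x|))) := by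
          exact mul_le_mul_of_nonneg_left (QQ'_bound x) (Real.exp_pos _).le
      _ = 8 * Real.exp (2*c*x - 2*|x|) := by
          rw [Real.exp_sub, Real.exp_neg]
          field_simp [Real.exp_ne_zero]

lemma integrable_eQ2 (c : ℝ) (hc : 0 < c) (hc1 : c < 1) :
    Integrable (fun x : ℝ => Real.exp (2*c*x) * Q x ^ 2) := by
  apply Integrable.mono' ((integrable_exp_lin_abs (2*c)
      (by rw [abs_of_pos (by linarith)]; linarith)).const_mul 8)
  · exact ((Real.continuous_exp.comp (continuous_const.mul continuous_id)).mul
      (continuous_Q.pow 2)).aestronglyMeasurable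
  · filter_upwards with x
    rw [Real.norm_eq_abs, abs_mul, abs_of_pos (Real.exp_pos _), abs_of_nonneg (sq_nonneg _)]
    calc Real.exp (2*c*x) * Q x ^ 2
        ≤ Real.exp (2*c*x) * (8 * Real.exp (-(2*|x|))) := by
          exact mul_le_mul_of_nonneg_left (Qsq_bound x) (Real.exp_pos _).le
      _ = 8 * Real.exp (2*c*x - 2*|x|) := by
          rw [Real.exp_sub, Real.exp_neg]
          field_simp [Real.exp_ne_zero]

lemma ibp (c : ℝ) (hc : 0 < c) (hc1 : c < 1) :
    ∫ x : ℝ, Real.exp (2*c*x) * (Q x * deriv Q x)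
      = -(c * ∫ x : ℝ, Real.exp (2*c*x) * Q x ^ 2) := by
  have hderiv : ∀ x : ℝ, HasDerivAt (fun x => Real.exp (2*c*x) * Q x ^ 2)
      (2*c*(Real.exp (2*c*x) * Q x ^ 2) + 2*(Real.exp (2*c*x) * (Q x * deriv Q x))) x := by
    intro x
    have h1 : HasDerivAt (fun x : ℝ => Real.exp (2*c*x)) (Real.exp (2*c*x) * (2*c)) x := by
      have := ((hasDerivAt_id x).const_mul (2*c)).exp
      simpa [mul_comm] using this
    have h2 : HasDerivAt (fun x => Q x ^ 2) (2 * Q x ^ 1 * deriv Q x) x := by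
      have := (Q_hasDeriv x).pow 2
      simp [deriv_Q_eq] at this ⊢; exact this
    have h3 := h1.mul h2
    exact h3.congr_deriv (by ring)
  have hi2 := integrable_eQ2 c hc hc1
  have hiq := integrable_eQQ c hc hc1
  have hf' : Integrable (fun x : ℝ => 2*c*(Real.exp (2*c*x) * Q x ^ 2)
      + 2*(Real.exp (2*c*x) * (Q x * deriv Q x))) :=
    (hi2.const_mul (2*c)).add (hiq.const_mul 2)
  have h0 := integral_eq_zero_of_hasDerivAt_of_integrable hderiv hf' hi2
  rw [integral_add (hi2.const_mul (2*c)) (hiq.const_mul 2),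
    MeasureTheory.integral_const_mul, MeasureTheory.integral_const_mul] at h0
  linarith

noncomputable def κ : ℝ := 2 * Real.sqrt 2

theorem stmt15 (c θ : ℝ) (hc : 0 < c) (hc1 : c < 1)
    (hθ : 1 < θ) (hθ' : θ < min (1 / c) 2) :
    ∃ C : ℝ, ∀ σ : ℝ, 1 < σ →
      |(∫ x : ℝ, (c * Q (c * (x - σ))) ^ 2 * Q x * deriv Q x)
          + c ^ 3 * κ ^ 2 * Real.exp (-2 * c * σ)
            * ∫ x : ℝ, Real.exp (2 * c * x) * (Q x) ^ 2|
        ≤ C * Real.exp (-2 * c * θ * σ) := by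
  have hθ2 : θ < 2 := hθ'.trans_le (min_le_right _ _)
  have hθc : θ < 1/c := hθ'.trans_le (min_le_left _ _)
  have hcθ : c * θ < 1 := by
    have := (lt_div_iff₀ hc).mp hθc
    linarith [this]
  set b : ℝ := 2*c*θ with hbdef
  have hb0 : 0 < b := by positivity
  have hb2 : b < 2 := by nlinarith
  have hb1 : 2*c ≤ b := by nlinarith
  have hb4 : b ≤ 4*c := by nlinarith
  have hint : Integrable (fun x : ℝ => Real.exp (b*x - 2*|x|)) :=
    integrable_exp_lin_abs b (by rw [abs_of_pos hb0]; exact hb2)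
  refine ⟨128*c^2 * ∫ x : ℝ, Real.exp (b*x - 2*|x|), ?_⟩
  intro σ hσ
  have hκ : κ ^ 2 = 8 := by
    rw [κ, mul_pow, Real.sq_sqrt (by norm_num : (0:ℝ) ≤ 2)]; norm_num
  -- the two integrands
  set f₁ : ℝ → ℝ := fun x => (c * Q (c * (x - σ))) ^ 2 * Q x * deriv Q x with hf1def
  set g : ℝ → ℝ := fun x =>
    8*c^2*Real.exp (-(2*c*σ)) * (Real.exp (2*c*x) * (Q x * deriv Q x)) with hgdef
  have hf1 : Integrable f₁ := by
    apply Integrable.mono' ((integrable_exp_lin_abs 0 (by norm_num)).const_mul (16*c^2))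
    · apply Continuous.aestronglyMeasurable
      apply Continuous.mul
      apply Continuous.mul
      · exact ((continuous_const.mul (continuous_Q.comp
          (continuous_const.mul (continuous_id.sub continuous_const)))).pow 2)
      · exact continuous_Q
      · exact continuous_derivQ
    · filter_upwards with x
      rw [Real.norm_eq_abs]
      have h1 : |f₁ x| = (c * Q (c * (x - σ))) ^ 2 * |Q x * deriv Q x| := by
        simp only [hf1def]
        rw [mul_assoc, abs_mul, abs_of_nonneg (sq_nonneg _)]
      have h2 : Q (c * (x - σ)) ^ 2 ≤ 2 := by
        have hcosh := Real.one_le_cosh (c * (x - σ))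
        have hcp := Real.cosh_pos (c * (x - σ))
        rw [Q, div_pow, Real.sq_sqrt (by norm_num : (0:ℝ) ≤ 2)]
        rw [div_le_iff₀ (by positivity)]
        nlinarith
      have h3 : (c * Q (c * (x - σ))) ^ 2 ≤ 2*c^2 := by
        rw [mul_pow]; nlinarith [sq_nonneg c]
      calc |f₁ x| ≤ 2*c^2 * (8 * Real.exp (-(2 * |x|))) := by
            rw [h1]
            exact mul_le_mul h3 (QQ'_bound x) (abs_nonneg _) (by positivity)
        _ = 16*c^2 * Real.exp (0*x - 2*|x|) := by ring_nf
  have hg : Integrable g :=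
    (integrable_eQQ c hc hc1).const_mul _
  have key : (∫ x : ℝ, f₁ x) + c ^ 3 * κ ^ 2 * Real.exp (-2 * c * σ)
      * (∫ x : ℝ, Real.exp (2 * c * x) * (Q x) ^ 2) = ∫ x : ℝ, (f₁ x - g x) := by
    rw [integral_sub hf1 hg, hgdef]
    rw [MeasureTheory.integral_const_mul, ibp c hc hc1, hκ,
      show (-2*c*σ : ℝ) = -(2*c*σ) from by ring]
    ring
  have hpt : ∀ x : ℝ, |f₁ x - g x|
      ≤ 128*c^2*Real.exp (-(b*σ)) * Real.exp (b*x - 2*|x|) := by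
    intro x
    have heq : f₁ x - g x
        = ((c * Q (c*(x-σ)))^2 - 8*c^2*Real.exp (2*(c*(x-σ)))) * (Q x * deriv Q x) := by
      have hE : Real.exp (-(2*c*σ)) * Real.exp (2*c*x) = Real.exp (2*(c*(x-σ))) := by
        rw [← Real.exp_add]; exact congrArg Real.exp (by ring)
      simp only [hf1def, hgdef]
      rw [← hE]
      ring
    rw [heq, abs_mul]
    have e1 : Real.exp (b*(x-σ)) * Real.exp (-(2*|x|))
        = Real.exp (-(b*σ)) * Real.exp (b*x - 2*|x|) := by
      rw [← Real.exp_add, ← Real.exp_add]; exact congrArg Real.exp (by ring)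
    calc |(c * Q (c*(x-σ)))^2 - 8*c^2*Real.exp (2*(c*(x-σ)))| * |Q x * deriv Q x|
        ≤ (16*c^2*Real.exp (b*(x-σ))) * (8 * Real.exp (-(2*|x|))) :=
          mul_le_mul (Rbound c b (x-σ) hc hb1 hb4) (QQ'_bound x) (abs_nonneg _) (by positivity)
      _ = 128*c^2*Real.exp (-(b*σ)) * Real.exp (b*x - 2*|x|) := by
          rw [show 16*c^2*Real.exp (b*(x-σ)) * (8 * Real.exp (-(2*|x|)))
            = 128*c^2*(Real.exp (b*(x-σ)) * Real.exp (-(2*|x|))) from by ring, e1]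
          ring
  rw [key]
  calc |∫ x : ℝ, (f₁ x - g x)| ≤ ∫ x : ℝ, |f₁ x - g x| := by
        simpa [Real.norm_eq_abs] using
          norm_integral_le_integral_norm (μ := volume) (fun x => f₁ x - g x)
    _ ≤ ∫ x : ℝ, 128*c^2*Real.exp (-(b*σ)) * Real.exp (b*x - 2*|x|) :=
        integral_mono (hf1.sub hg).abs (hint.const_mul _) hpt
    _ = (128*c^2 * ∫ x : ℝ, Real.exp (b*x - 2*|x|)) * Real.exp (-2 * c * θ * σ) := by
        rw [MeasureTheory.integral_const_mul]
        rw [hbdef]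
        ring_nf
end

section
/- Let Q(x) = √2/cosh(x), 0 < c < 1, σ > 1, and 1 < θ < min{1/c, 2}. Then ∫_ℝ e^{2c(x-σ)} Q_c²(x-σ) Q²(x) dx ≤ C e^{-2cθσ}, where Q_c(x) = cQ(cx) and C does not depend on σ. -/
open Real MeasureTheory

lemma Q_sq_le (y : ℝ) : Q y ^ 2 ≤ 8 * Real.exp (-(2*|y|)) := by
  have hc : Real.exp |y| / 2 ≤ Real.cosh y := by
    rw [Real.cosh_eq]
    rcases abs_cases y with ⟨h, _⟩ | ⟨h, _⟩ <;> rw [h] <;>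
      [linarith [Real.exp_pos (-y)]; linarith [Real.exp_pos y]]
  have hpos : 0 < Real.cosh y := Real.cosh_pos y
  have hq : Q y ^ 2 = 2 / Real.cosh y ^ 2 := by
    rw [Q, div_pow, Real.sq_sqrt (by norm_num : (2:ℝ) ≥ 0)]
  rw [hq, div_le_iff₀ (by positivity)]
  have hsq : Real.exp |y| ^ 2 = Real.exp (2*|y|) := by
    rw [sq, ← Real.exp_add]; ring_nf
  have hinv : Real.exp (-(2*|y|)) * Real.exp (2*|y|) = 1 := by
    rw [← Real.exp_add]; simp
  have he2 := Real.exp_pos (-(2*|y|))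
  have hc2 : Real.exp |y| ^ 2 / 4 ≤ Real.cosh y ^ 2 := by nlinarith [Real.exp_pos |y|]
  nlinarith [mul_le_mul_of_nonneg_left hc2 he2.le]

lemma exp_neg_abs_le (b x : ℝ) (hb : 0 < b) :
    Real.exp (-(b*|x|)) ≤ (1 + 4/b^2) * (1/(1+x^2)) := by
  rw [mul_one_div, le_div_iff₀ (by positivity)]
  have ht : (0:ℝ) ≤ |x| := abs_nonneg x
  have he : b*|x|/2 + 1 ≤ Real.exp (b*|x|/2) := Real.add_one_le_exp _
  have hsq : Real.exp (b*|x|/2)^2 = Real.exp (b*|x|) := by rw [sq, ← Real.exp_add]; ring_nf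
  have hq : (b*|x|/2 + 1)^2 ≤ Real.exp (b*|x|) := by
    rw [← hsq]; exact pow_le_pow_left₀ (by positivity) he 2
  have hinv : Real.exp (-(b*|x|)) * Real.exp (b*|x|) = 1 := by rw [← Real.exp_add]; simp
  have h1 : Real.exp (-(b*|x|)) ≤ 1 := Real.exp_le_one_iff.2 (by nlinarith)
  have hx2 : |x|^2 = x^2 := sq_abs x
  rw [show (1+4/b^2 : ℝ) = (b^2+4)/b^2 by field_simp, le_div_iff₀ (by positivity)]
  have H : Real.exp (-(b*|x|)) * ((b*|x|/2 + 1)^2) ≤ 1 := by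
    calc Real.exp (-(b*|x|)) * ((b*|x|/2 + 1)^2)
        ≤ Real.exp (-(b*|x|)) * Real.exp (b*|x|) :=
          mul_le_mul_of_nonneg_left hq (Real.exp_pos _).le
      _ = 1 := hinv
  nlinarith [mul_nonneg (Real.exp_pos (-(b*|x|))).le (mul_nonneg hb.le ht),
    mul_nonneg (sq_nonneg b) (by linarith : (0:ℝ) ≤ 1 - Real.exp (-(b*|x|))),
    Real.exp_pos (-(b*|x|))]

theorem stmt16 (c θ : ℝ) (hc : 0 < c) (hc1 : c < 1)
    (hθ : 1 < θ) (hθ' : θ < min (1 / c) 2) :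
    ∃ C : ℝ, ∀ σ : ℝ, 1 < σ →
      (∫ x : ℝ, Real.exp (2 * c * (x - σ)) * (c * Q (c * (x - σ))) ^ 2 * (Q x) ^ 2)
        ≤ C * Real.exp (-2 * c * θ * σ) := by
  have hθpos : 0 < θ := lt_trans one_pos hθ
  have hθ2 : θ < 2 := lt_of_lt_of_le hθ' (min_le_right _ _)
  have hcθ : c * θ < 1 := by
    have h1 : θ < 1/c := lt_of_lt_of_le hθ' (min_le_left _ _)
    have := mul_lt_mul_of_pos_left h1 hc
    rwa [mul_one_div, div_self hc.ne'] at this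
  set b : ℝ := 2 - 2*c*θ with hbdef
  have hb : 0 < b := by simp only [hbdef]; linarith
  refine ⟨64 * c^2 * (1 + 4/b^2) * (∫ x : ℝ, 1/(1+x^2)), fun σ hσ => ?_⟩
  have hσ0 : 0 < σ := lt_trans one_pos hσ
  set K : ℝ := 64 * c^2 * (1 + 4/b^2) * Real.exp (-2*c*θ*σ) with hKdef
  have hint : Integrable (fun x : ℝ => K * (1/(1+x^2))) :=
    by simpa [one_div] using integrable_inv_one_add_sq.const_mul K
  have hmono : ∀ x : ℝ, Real.exp (2 * c * (x - σ)) * (c * Q (c * (x - σ))) ^ 2 * (Q x) ^ 2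
      ≤ K * (1/(1+x^2)) := by
    intro x
    have habs : |c*(x-σ)| = c*|x-σ| := by rw [abs_mul, abs_of_pos hc]
    have hq1 : Q (c*(x-σ))^2 ≤ 8 * Real.exp (-(2*|c*(x-σ)|)) := Q_sq_le _
    have hq2 : (Q x)^2 ≤ 8 * Real.exp (-(2*|x|)) := Q_sq_le x
    have key : 2*c*(x-σ) - 2*(c*|x-σ|) - 2*|x| ≤ -2*c*θ*σ - b*|x| := by
      simp only [hbdef]
      rcases abs_cases (x-σ) with ⟨h1,h1'⟩|⟨h1,h1'⟩ <;>
        rcases abs_cases x with ⟨h2,h2'⟩|⟨h2,h2'⟩ <;> rw [h1, h2]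
      · nlinarith [mul_nonneg (mul_pos hc hθpos).le h1']
      · linarith
      · nlinarith [mul_nonneg (by nlinarith : (0:ℝ) ≤ 4*c - 2*c*θ) (by linarith : (0:ℝ) ≤ σ - x)]
      · nlinarith [mul_nonneg (by nlinarith : (0:ℝ) ≤ 4*c - 2*c*θ) hσ0.le,
          mul_nonpos_of_nonneg_of_nonpos (by nlinarith : (0:ℝ) ≤ 4*c + 2*c*θ) h2'.le]
    calc Real.exp (2 * c * (x - σ)) * (c * Q (c * (x - σ))) ^ 2 * (Q x) ^ 2
        = (c^2 * Real.exp (2*c*(x-σ))) * (Q (c*(x-σ))^2) * ((Q x)^2) := by ring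
      _ ≤ (c^2 * Real.exp (2*c*(x-σ))) * (8 * Real.exp (-(2*|c*(x-σ)|)))
            * (8 * Real.exp (-(2*|x|))) := by
          apply mul_le_mul (mul_le_mul_of_nonneg_left hq1 (by positivity)) hq2
            (by positivity) (by positivity)
      _ = 64 * c^2 * Real.exp (2*c*(x-σ) - 2*(c*|x-σ|) - 2*|x|) := by
          rw [show (2*c*(x-σ) - 2*(c*|x-σ|) - 2*|x|)
              = (2*c*(x-σ)) + (-(2*|c*(x-σ)|)) + (-(2*|x|)) by rw [habs]; ring,
            Real.exp_add, Real.exp_add]; ring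
      _ ≤ 64 * c^2 * (Real.exp (-2*c*θ*σ) * Real.exp (-(b*|x|))) := by
          rw [← Real.exp_add]
          exact mul_le_mul_of_nonneg_left (Real.exp_le_exp.2 (by linarith)) (by positivity)
      _ ≤ 64 * c^2 * (Real.exp (-2*c*θ*σ) * ((1 + 4/b^2) * (1/(1+x^2)))) := by
          apply mul_le_mul_of_nonneg_left (mul_le_mul_of_nonneg_left
            (exp_neg_abs_le b x hb) (Real.exp_pos _).le) (by positivity)
      _ = K * (1/(1+x^2)) := by rw [hKdef]; ring
  calc (∫ x : ℝ, Real.exp (2 * c * (x - σ)) * (c * Q (c * (x - σ))) ^ 2 * (Q x) ^ 2)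
      ≤ ∫ x : ℝ, K * (1/(1+x^2)) :=
        integral_mono_of_nonneg (ae_of_all _ fun x => by positivity) hint (ae_of_all _ hmono)
    _ = K * ∫ x : ℝ, 1/(1+x^2) := integral_const_mul _ _
    _ = 64 * c^2 * (1 + 4/b^2) * (∫ x : ℝ, 1/(1+x^2)) * Real.exp (-2*c*θ*σ) := by
        rw [hKdef]; ring
    _ = 64 * c^2 * (1 + 4/b^2) * (∫ x : ℝ, 1/(1+x^2)) * Real.exp (-2*c*θ*σ) := rfl
end
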